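/- arXiv:1701.00774 — 5 statements merged into one kernel-verified Lean document; each statement's English description precedes it below -/
import Mathlib

section
/- Let β > 1 and x ∈ I_β = [-β/(β+1), 1/(β+1)). Define the digit sequence x_i = ⌊-β T_{-β}^{i-1}(x) + β/(β+1)⌋ for i ≥ 1. Then x = Σ_{i≥1} x_i / (-β)^i. -/
/-!
Writing `T = T_{-β}` and `aₙ = Tⁿ x / (-β)ⁿ`, the definition of `T` reads
`T y = -β y - d(y)` with `d(y)` the digit of `y`, so the `n`-th term of the series is
`aₙ - aₙ₊₁` and the series telescopes to `a₀ = x`. Since `T` maps into `I_β ⊆ [-1, 1]`,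
`|aₙ| ≤ β⁻ⁿ`, so `(aₙ)` is absolutely summable and the telescoping is legitimate.
-/

/-- The `(-β)`-transformation. -/
noncomputable def Tm (β x : ℝ) : ℝ := -β * x - ⌊-β * x + β / (β + 1)⌋

/-- The digits of the `(-β)`-expansion of `x`, 0-indexed: `dig β x n = x_{n+1}`,
where `x_i = ⌊-β T_{-β}^{i-1}(x) + β/(β+1)⌋`. -/
noncomputable def dig (β x : ℝ) (n : ℕ) : ℤ := ⌊-β * (Tm β)^[n] x + β / (β + 1)⌋

open Set

lemma Tm_eq_fract_sub (β x : ℝ) :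
    Tm β x = Int.fract (-β * x + β / (β + 1)) - β / (β + 1) := by
  rw [Int.fract, Tm]
  ring

lemma Tm_mem_Ico {β : ℝ} (hβ : β + 1 ≠ 0) (x : ℝ) :
    Tm β x ∈ Ico (-β / (β + 1)) (1 / (β + 1)) := by
  have hright : 1 / (β + 1) = 1 - β / (β + 1) := by field_simp; ring
  rw [Tm_eq_fract_sub, neg_div, hright]
  constructor
  · linarith [Int.fract_nonneg (-β * x + β / (β + 1))]
  · linarith [Int.fract_lt_one (-β * x + β / (β + 1))]

lemma iterate_Tm_mem_Ico {β x : ℝ} (hβ : β + 1 ≠ 0)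
    (hx : x ∈ Ico (-β / (β + 1)) (1 / (β + 1))) (n : ℕ) :
    (Tm β)^[n] x ∈ Ico (-β / (β + 1)) (1 / (β + 1)) := by
  cases n with
  | zero => exact hx
  | succ n => rw [Function.iterate_succ_apply']; exact Tm_mem_Ico hβ _

lemma Ico_subset_Icc_neg_one_one {β : ℝ} (hβ : 0 ≤ β) :
    Ico (-β / (β + 1)) (1 / (β + 1)) ⊆ Icc (-1) 1 := by
  have hpos : 0 < β + 1 := by linarith
  have hleft : -1 ≤ -β / (β + 1) := by
    rw [neg_div, neg_le_neg_iff, div_le_one hpos]; linarith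
  have hright : 1 / (β + 1) ≤ 1 := by rw [div_le_one hpos]; linarith
  exact Ico_subset_Icc_self.trans (Icc_subset_Icc hleft hright)

lemma iterate_succ_Tm (β x : ℝ) (n : ℕ) :
    (Tm β)^[n + 1] x = -β * (Tm β)^[n] x - dig β x n := by
  rw [Function.iterate_succ_apply', Tm, dig]

lemma dig_div_eq_sub {β : ℝ} (hβ : β ≠ 0) (x : ℝ) (n : ℕ) :
    (dig β x n : ℝ) / (-β) ^ (n + 1)
      = (Tm β)^[n] x / (-β) ^ n - (Tm β)^[n + 1] x / (-β) ^ (n + 1) := by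
  have hβ' : -β ≠ 0 := neg_ne_zero.mpr hβ
  rw [iterate_succ_Tm, pow_succ]
  field_simp
  ring

lemma summable_iterate_div_pow {β x : ℝ} (hβ : 1 < β)
    (hx : x ∈ Ico (-β / (β + 1)) (1 / (β + 1))) :
    Summable fun n : ℕ => (Tm β)^[n] x / (-β) ^ n := by
  have hβ0 : 0 < β := by linarith
  refine .of_norm_bounded (summable_geometric_of_lt_one (by positivity)
    (inv_lt_one_of_one_lt₀ hβ)) fun n => ?_
  have hle : |(Tm β)^[n] x| ≤ 1 := abs_le.mpr
    (Ico_subset_Icc_neg_one_one hβ0.le (iterate_Tm_mem_Ico (by linarith) hx n))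
  rw [Real.norm_eq_abs, abs_div, abs_pow, abs_neg, abs_of_pos hβ0, inv_pow, ← one_div]
  gcongr

theorem stmt2 (β : ℝ) (hβ : 1 < β) (x : ℝ)
    (hx : x ∈ Set.Ico (-β / (β + 1)) (1 / (β + 1))) :
    HasSum (fun n : ℕ => (dig β x n : ℝ) / (-β) ^ (n + 1)) x := by
  set a : ℕ → ℝ := fun n => (Tm β)^[n] x / (-β) ^ n
  have ha : HasSum a (∑' n, a n) := (summable_iterate_div_pow hβ hx).hasSum
  have ha_succ : HasSum (fun n => a (n + 1)) (∑' n, a n - a 0) := by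
    simpa using (hasSum_nat_add_iff' 1).mpr ha
  have htelescope := ha.sub ha_succ
  simp only [sub_sub_cancel, a, pow_zero, div_one, Function.iterate_zero_apply] at htelescope
  simpa only [dig_div_eq_sub (by linarith : β ≠ 0)] using htelescope
end

section
/- Let β > 1 and let (d_i)_{i≥1} be the (-β)-expansion of l_β = -β/(β+1). If d_{2i} < d_1 for all integers i ≥ 1, then β is greater than or equal to the golden ratio (1+√5)/2. -/
open Real goldenRatio

namespace Tm

variable {β : ℝ}

lemma iterate_succ (x : ℝ) (n : ℕ) :
    (Tm β)^[n + 1] x = -β * (Tm β)^[n] x - dig β x n := by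
  rw [Function.iterate_succ_apply']
  rfl

lemma eq_fract_sub (x : ℝ) : Tm β x = Int.fract (-β * x + β / (β + 1)) - β / (β + 1) := by
  rw [Tm, Int.fract]
  ring

lemma neg_div_le (x : ℝ) : -β / (β + 1) ≤ Tm β x := by
  rw [eq_fract_sub, neg_div]
  linarith [Int.fract_nonneg (-β * x + β / (β + 1))]

lemma lt_inv_add_one (hβ : β + 1 ≠ 0) (x : ℝ) : Tm β x < 1 / (β + 1) := by
  have h : 1 / (β + 1) = 1 - β / (β + 1) := by field_simp; ring
  rw [eq_fract_sub, h]
  linarith [Int.fract_lt_one (-β * x + β / (β + 1))]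

lemma iterate_lt_inv_add_one (hβ : β + 1 ≠ 0) (x : ℝ) (n : ℕ) :
    (Tm β)^[n + 1] x < 1 / (β + 1) := by
  rw [Function.iterate_succ_apply']
  exact lt_inv_add_one hβ _

lemma neg_div_le_iterate (x : ℝ) (n : ℕ) : -β / (β + 1) ≤ (Tm β)^[n + 1] x := by
  rw [Function.iterate_succ_apply']
  exact neg_div_le _

lemma neg_mul_neg_div_add_div (hβ : β + 1 ≠ 0) : -β * (-β / (β + 1)) + β / (β + 1) = β := by
  field_simp

lemma dig_neg_div_zero (hβ : β + 1 ≠ 0) : dig β (-β / (β + 1)) 0 = ⌊β⌋ :=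
  congrArg Int.floor (neg_mul_neg_div_add_div hβ)

lemma apply_neg_div (hβ : β + 1 ≠ 0) : Tm β (-β / (β + 1)) = β ^ 2 / (β + 1) - ⌊β⌋ := by
  have h : -β * (-β / (β + 1)) = β ^ 2 / (β + 1) := by field_simp
  rw [Tm, neg_mul_neg_div_add_div hβ, h]

end Tm

section Digits

variable {β t : ℝ}

lemma floor_digit_nonneg (hβ : 0 ≤ β) (ht : t < 1 / (β + 1)) :
    0 ≤ ⌊-β * t + β / (β + 1)⌋ := by
  refine Int.floor_nonneg.mpr ?_
  have : β * t ≤ β * (1 / (β + 1)) := mul_le_mul_of_nonneg_left ht.le hβ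
  rw [mul_one_div] at this
  linarith

lemma floor_digit_eq_zero_of_nonneg (hβ : 0 ≤ β) (h0 : 0 ≤ t) (ht : t < 1 / (β + 1)) :
    ⌊-β * t + β / (β + 1)⌋ = 0 := by
  have hβ1 : 0 < β + 1 := by linarith
  have hlt : β / (β + 1) < 1 := (div_lt_one hβ1).mpr (by linarith)
  refine le_antisymm ?_ (floor_digit_nonneg hβ ht)
  rw [← Int.lt_add_one_iff, zero_add, Int.floor_lt, Int.cast_one]
  nlinarith

lemma dig_nonneg (hβ : 0 ≤ β) {x : ℝ} (hx : x < 1 / (β + 1)) (n : ℕ) : 0 ≤ dig β x n := by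
  cases n with
  | zero => exact floor_digit_nonneg hβ hx
  | succ n => exact floor_digit_nonneg hβ (Tm.iterate_lt_inv_add_one (by linarith) x n)

lemma Tm.iterate_two_mul_add_one (hβ : 0 ≤ β) {x : ℝ} (hx : Tm β x ≤ 0)
    (hdig : ∀ k, dig β x (2 * k + 1) = 0) (k : ℕ) :
    (Tm β)^[2 * k + 1] x = β ^ (2 * k) * Tm β x := by
  induction k with
  | zero => simp
  | succ k ih =>
    have heven : (Tm β)^[2 * k + 2] x = -(β ^ (2 * k + 1) * Tm β x) := by
      rw [Tm.iterate_succ, hdig, ih]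
      push_cast
      ring
    have heven_nonneg : 0 ≤ (Tm β)^[2 * k + 2] x := by
      rw [heven, neg_nonneg]
      exact mul_nonpos_of_nonneg_of_nonpos (by positivity) hx
    have hzero : dig β x (2 * k + 2) = 0 :=
      floor_digit_eq_zero_of_nonneg hβ heven_nonneg (Tm.iterate_lt_inv_add_one (by linarith) x _)
    rw [show 2 * (k + 1) + 1 = 2 * k + 2 + 1 by ring, Tm.iterate_succ, hzero, heven]
    push_cast
    ring

end Digits

lemma sq_lt_add_one_of_lt_goldenRatio {β : ℝ} (h0 : 0 ≤ β) (h : β < φ) : β ^ 2 < β + 1 := by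
  have hfactor : β ^ 2 - β - 1 = (β - φ) * (β - ψ) := by
    linear_combination -goldenRatio_add_goldenConj - goldenRatio_mul_goldenConj
  nlinarith [goldenConj_neg]

lemma exists_pow_two_mul_mul_lt {β c : ℝ} (hβ : 1 < β) (hc : c < 0) (M : ℝ) :
    ∃ k : ℕ, β ^ (2 * k) * c < M := by
  have hβ2 : 1 < β ^ 2 := one_lt_pow₀ hβ two_ne_zero
  have := (tendsto_pow_atTop_atTop_of_one_lt hβ2).atTop_mul_const_of_neg hc
  obtain ⟨k, hk⟩ := (this.eventually (Filter.eventually_lt_atBot M)).exists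
  exact ⟨k, by simpa [pow_mul] using hk⟩

theorem stmt4 (β : ℝ) (hβ : 1 < β) (d : ℕ → ℤ)
    (hd : ∀ i, 1 ≤ i → d i = dig β (-β / (β + 1)) (i - 1))
    (h : ∀ i, 1 ≤ i → d (2 * i) < d 1) :
    (1 + Real.sqrt 5) / 2 ≤ β := by
  by_contra! hlt
  have hquad : β ^ 2 < β + 1 := sq_lt_add_one_of_lt_goldenRatio (by linarith) hlt
  have hβ1 : 0 < β + 1 := by linarith
  have hfloor : ⌊β⌋ = 1 := Int.floor_eq_iff.mpr ⟨by push_cast; linarith, by push_cast; nlinarith⟩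
  have hd1 : dig β (-β / (β + 1)) 0 = 1 := by rw [Tm.dig_neg_div_zero hβ1.ne', hfloor]
  have hT1 : Tm β (-β / (β + 1)) < 0 := by
    rw [Tm.apply_neg_div hβ1.ne', hfloor, Int.cast_one, sub_neg, div_lt_one hβ1]
    exact hquad
  have hdig : ∀ k, dig β (-β / (β + 1)) (2 * k + 1) = 0 := by
    intro k
    have hk := h (k + 1) (by omega)
    rw [hd _ (by omega), hd 1 le_rfl, show 2 * (k + 1) - 1 = 2 * k + 1 by omega, hd1] at hk
    have hl : -β / (β + 1) < 1 / (β + 1) := by gcongr; linarith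
    have := dig_nonneg (by linarith) hl (2 * k + 1)
    omega
  obtain ⟨k, hk⟩ := exists_pow_two_mul_mul_lt hβ hT1 (-β / (β + 1))
  rw [← Tm.iterate_two_mul_add_one (by linarith) hT1.le hdig] at hk
  exact hk.not_ge (Tm.neg_div_le_iterate _ _)
end

section
/- Let β > 1 and suppose the (-β)-expansion of l_β = -β/(β+1) is purely periodic, d(l_β, -β) = (d_1 ... d_h)^∞ with period h. Then the last digit of the period is nonzero: d_h ≠ 0. -/
lemma Tm_mem (β : ℝ) (hβ : 1 < β) (x : ℝ) :
    -β / (β + 1) ≤ Tm β x ∧ Tm β x < 1 / (β + 1) := by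
  have hb : (0:ℝ) < β + 1 := by linarith
  have hrepr : Tm β x = Int.fract (-β * x + β / (β + 1)) - β / (β + 1) := by
    rw [Int.fract]; ring_nf; rw [Tm]; ring
  have h0 := Int.fract_nonneg (-β * x + β / (β + 1))
  have h1 := Int.fract_lt_one (-β * x + β / (β + 1))
  have hkey : 1 - β / (β + 1) = 1 / (β + 1) := by field_simp; ring
  have hneg : -β / (β + 1) = -(β / (β + 1)) := by ring
  constructor
  · rw [hrepr, hneg]; linarith
  · rw [hrepr]; linarith

lemma eq_of_dig_eq (β : ℝ) (hβ : 1 < β) (x x' : ℝ)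
    (hx1 : -β / (β + 1) ≤ x) (hx2 : x < 1 / (β + 1))
    (hx1' : -β / (β + 1) ≤ x') (hx2' : x' < 1 / (β + 1))
    (hdig : ∀ n, dig β x n = dig β x' n) : x = x' := by
  have hb : (0:ℝ) < β + 1 := by linarith
  have hwidth : 1 / (β + 1) - (-β / (β + 1)) = 1 := by field_simp; ring
  have key : ∀ n, (Tm β)^[n] x - (Tm β)^[n] x' = (-β)^n * (x - x') := by
    intro n
    induction n with
    | zero => simp
    | succ n ih =>
      have hdn := hdig n
      unfold dig at hdn
      rw [Function.iterate_succ_apply', Function.iterate_succ_apply', Tm, Tm, hdn]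
      push_cast
      rw [pow_succ]
      nlinarith [ih]
  have hmem : ∀ n, -β / (β + 1) ≤ (Tm β)^[n] x ∧ (Tm β)^[n] x < 1 / (β + 1) := by
    intro n
    cases n with
    | zero => exact ⟨hx1, hx2⟩
    | succ n => rw [Function.iterate_succ_apply']; exact Tm_mem β hβ _
  have hmem' : ∀ n, -β / (β + 1) ≤ (Tm β)^[n] x' ∧ (Tm β)^[n] x' < 1 / (β + 1) := by
    intro n
    cases n with
    | zero => exact ⟨hx1', hx2'⟩
    | succ n => rw [Function.iterate_succ_apply']; exact Tm_mem β hβ _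
  by_contra hne
  have habs : 0 < |x - x'| := abs_pos.mpr (sub_ne_zero.mpr hne)
  obtain ⟨n, hn⟩ := pow_unbounded_of_one_lt (1 / |x - x'|) hβ
  have hbound : β ^ n * |x - x'| < 1 := by
    have h1 := (hmem n).1
    have h2 := (hmem n).2
    have h1' := (hmem' n).1
    have h2' := (hmem' n).2
    have : |(Tm β)^[n] x - (Tm β)^[n] x'| < 1 := by
      rw [abs_sub_lt_iff]; constructor <;> linarith
    rw [key n, abs_mul, abs_pow, abs_neg, abs_of_pos (by linarith : (0:ℝ) < β)] at this
    exact this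
  have : 1 < β ^ n * |x - x'| := by
    rw [div_lt_iff₀ habs] at hn
    linarith
  linarith

theorem stmt5 (β : ℝ) (hβ : 1 < β) (d : ℕ → ℤ)
    (hd : ∀ i, 1 ≤ i → d i = dig β (-β / (β + 1)) (i - 1))
    (h : ℕ) (hh : 1 ≤ h)
    (hper : ∀ i, 1 ≤ i → d (i + h) = d i) :
    d h ≠ 0 := by
  have hb : (0:ℝ) < β + 1 := by linarith
  set l : ℝ := -β / (β + 1) with hl
  have hl2 : l < 1 / (β + 1) := by
    rw [hl, div_lt_div_iff_of_pos_right hb]; linarith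
  -- the digits of l are h-periodic
  have hdigper : ∀ n, dig β l (n + h) = dig β l n := by
    intro n
    have e1 := hd (n + 1) (by omega)
    have e2 := hd (n + 1 + h) (by omega)
    have e3 := hper (n + 1) (by omega)
    simp only [Nat.add_sub_cancel] at e1
    have : n + 1 + h - 1 = n + h := by omega
    rw [this] at e2
    rw [← e1, ← e2, e3]
  -- digits of T^h l equal digits of l
  have hdeq : ∀ n, dig β ((Tm β)^[h] l) n = dig β l n := by
    intro n
    have : (Tm β)^[n] ((Tm β)^[h] l) = (Tm β)^[n + h] l := by
      rw [Function.iterate_add_apply]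
    unfold dig
    rw [this]
    exact hdigper n
  obtain ⟨k, rfl⟩ : ∃ k, h = k + 1 := ⟨h - 1, by omega⟩
  have hThmem : -β / (β + 1) ≤ (Tm β)^[k + 1] l ∧ (Tm β)^[k + 1] l < 1 / (β + 1) := by
    rw [Function.iterate_succ_apply']; exact Tm_mem β hβ _
  have hfix : (Tm β)^[k + 1] l = l :=
    eq_of_dig_eq β hβ _ l hThmem.1 hThmem.2 le_rfl hl2 hdeq
  -- now suppose d h = 0
  intro h0
  have hdh : d (k + 1) = dig β l k := by
    have := hd (k + 1) (by omega)
    simpa using this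
  set y : ℝ := (Tm β)^[k] l with hy
  have hdig0 : (⌊-β * y + β / (β + 1)⌋ : ℤ) = 0 := by
    have hdk : dig β l k = 0 := by rw [← hdh]; exact h0
    exact hdk
  have hTy : Tm β y = l := by
    rw [← hfix, Function.iterate_succ_apply']
  have : -β * y = l := by
    rw [Tm, hdig0] at hTy
    push_cast at hTy
    linarith
  have hyval : y = 1 / (β + 1) := by
    have hβ0 : β ≠ 0 := by linarith
    rw [hl] at this
    field_simp at this ⊢
    nlinarith [this]
  have hylt : y < 1 / (β + 1) := by
    cases k with
    | zero => simpa [hy] using hl2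
    | succ m =>
      rw [hy, Function.iterate_succ_apply']
      exact (Tm_mem β hβ _).2
  rw [hyval] at hylt
  exact lt_irrefl _ hylt
end

section
/- Let β > 1 with 1 < β < γ₀ = (1+√5)/2, and let (d_i)_{i≥1} be the (-β)-expansion of l_β = -β/(β+1). Then there exists an integer i₀ ≥ 1 such that d_1 d_2 ... d_{2i₀} = 1 0^{2(i₀-1)} 1 (i.e. d_1 = 1, d_{2i₀} = 1, and d_j = 0 for 1 < j < 2i₀). -/
theorem stmt13 (β : ℝ) (hβ1 : 1 < β) (hβ2 : β < (1 + Real.sqrt 5) / 2)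
    (d : ℕ → ℤ) (hd : ∀ i, 1 ≤ i → d i = dig β (-β / (β + 1)) (i - 1)) :
    ∃ i₀ : ℕ, 1 ≤ i₀ ∧ d 1 = 1 ∧ d (2 * i₀) = 1 ∧
      ∀ j : ℕ, 1 < j → j < 2 * i₀ → d j = 0 := by
  have hβ0 : (0:ℝ) < β := by linarith
  have hβp1 : (0:ℝ) < β + 1 := by linarith
  set l : ℝ := -β / (β + 1) with hl
  set x1 : ℝ := (β ^ 2 - β - 1) / (β + 1) with hx1
  have hs5 : Real.sqrt 5 ^ 2 = 5 := Real.sq_sqrt (by norm_num)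
  have hs5' : 0 ≤ Real.sqrt 5 := Real.sqrt_nonneg 5
  have h1 : 2 * β - 1 < Real.sqrt 5 := by linarith
  have hquad : β ^ 2 - β - 1 < 0 := by
    nlinarith [mul_pos (sub_pos.mpr h1) (show (0:ℝ) < Real.sqrt 5 + (2 * β - 1) by linarith)]
  have hβ2' : β < 2 := by nlinarith
  have hx1neg : x1 < 0 := div_neg_of_neg_of_pos (by linarith) hβp1
  have hlx1 : l < x1 := by
    rw [hl, hx1, div_lt_div_iff₀ hβp1 hβp1]; nlinarith
  -- useful identities
  have key1 : β * (1 / (β * (β + 1))) = 1 / (β + 1) := by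
    field_simp
  have key2 : 1 / (β + 1) + β / (β + 1) = 1 := by
    rw [← add_div, div_eq_one_iff_eq (ne_of_gt hβp1)]; ring
  -- first step : floor at l is 1, T l = x1
  have hval : -β * l + β / (β + 1) = β := by
    rw [hl]; field_simp
  have hfloor1 : ⌊-β * l + β / (β + 1)⌋ = 1 := by
    rw [hval, Int.floor_eq_iff]
    refine ⟨by exact_mod_cast hβ1.le, by push_cast; linarith⟩
  have hTl : Tm β l = x1 := by
    rw [Tm, hfloor1, hx1, hl]; push_cast; field_simp; ring
  -- step lemma: digit 0
  have hstep0 : ∀ x : ℝ, -(1 / (β * (β + 1))) < x → x < 1 / (β + 1) →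
      ⌊-β * x + β / (β + 1)⌋ = 0 ∧ Tm β x = -β * x := by
    intro x hx1' hx2'
    have hlt : -β * x + β / (β + 1) < 1 := by
      have h : -β * x < β * (1 / (β * (β + 1))) := by nlinarith
      rw [key1] at h; linarith
    have hge : 0 ≤ -β * x + β / (β + 1) := by
      have h : -β * x > -(β * (1 / (β + 1))) := by nlinarith
      rw [mul_one_div] at h; linarith
    have hf : ⌊-β * x + β / (β + 1)⌋ = 0 := Int.floor_eq_zero_iff.mpr ⟨hge, hlt⟩
    exact ⟨hf, by rw [Tm, hf]; push_cast; ring⟩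
  -- step lemma: digit 1
  have hstep1 : ∀ x : ℝ, l ≤ x → x ≤ -(1 / (β * (β + 1))) →
      ⌊-β * x + β / (β + 1)⌋ = 1 := by
    intro x hx1' hx2'
    have hge : (1:ℝ) ≤ -β * x + β / (β + 1) := by
      have h : β * (1 / (β * (β + 1))) ≤ -β * x := by nlinarith
      rw [key1] at h; linarith
    have hlt : -β * x + β / (β + 1) < 2 := by
      have h : -β * x ≤ -β * l := by nlinarith
      linarith [hval]
    rw [Int.floor_eq_iff]
    exact ⟨by exact_mod_cast hge, by push_cast; linarith⟩
  -- minimal k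
  have hc : 0 < -x1 := by linarith
  have hex : ∃ n : ℕ, 1 / (β * (β + 1)) ≤ β ^ (2 * n) * (-x1) := by
    obtain ⟨n, hn⟩ := pow_unbounded_of_one_lt ((1 / (β * (β + 1))) / (-x1))
      (show (1:ℝ) < β ^ 2 by nlinarith)
    refine ⟨n, ?_⟩
    rw [pow_mul]
    rw [div_lt_iff₀ hc] at hn
    linarith
  obtain ⟨k, hk, hkmin'⟩ : ∃ k, 1 / (β * (β + 1)) ≤ β ^ (2 * k) * (-x1) ∧
      ∀ j, j < k → ¬(1 / (β * (β + 1)) ≤ β ^ (2 * j) * (-x1)) :=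
    ⟨Nat.find hex, Nat.find_spec hex, fun j hj => Nat.find_min hex hj⟩
  have hkmin : ∀ j, j < k → β ^ (2 * j) * (-x1) < 1 / (β * (β + 1)) :=
    fun j hj => lt_of_not_ge (hkmin' j hj)
  -- bounds for intermediate points
  have hbound : ∀ m, m < 2 * k →
      -(1 / (β * (β + 1))) < (-β) ^ m * x1 ∧ (-β) ^ m * x1 < 1 / (β + 1) := by
    intro m hm
    rcases Nat.even_or_odd m with he | ho
    · rw [he.neg_pow]
      obtain ⟨j, hj⟩ := he
      have hjk : j < k := by omega
      have h2j := hkmin j hjk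
      have hpow : β ^ m = β ^ (2 * j) := by rw [hj]; ring_nf
      constructor
      · rw [hpow]; nlinarith
      · have h1' : β ^ m * x1 < 0 := mul_neg_of_pos_of_neg (pow_pos hβ0 m) hx1neg
        have h2' : (0:ℝ) < 1 / (β + 1) := by positivity
        linarith
    · rw [ho.neg_pow]
      obtain ⟨j, hj⟩ := ho
      have hjk : j < k := by omega
      have h2j := hkmin j hjk
      have hpow : β ^ m = β * β ^ (2 * j) := by rw [hj]; ring
      constructor
      · have h1' : (0:ℝ) < β ^ m * (-x1) := mul_pos (pow_pos hβ0 m) hc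
        rw [mul_neg] at h1'
        have h0 : (0:ℝ) < 1 / (β * (β + 1)) := by positivity
        linarith
      · rw [hpow]
        have h : β * (β ^ (2 * j) * (-x1)) < β * (1 / (β * (β + 1))) :=
          (mul_lt_mul_iff_right₀ hβ0).mpr h2j
        rw [key1] at h
        have heq : -(β * β ^ (2 * j)) * x1 = β * (β ^ (2 * j) * (-x1)) := by ring
        rw [heq]
        exact h
  -- orbit
  have horb : ∀ m, m ≤ 2 * k → (Tm β)^[m + 1] l = (-β) ^ m * x1 := by
    intro m
    induction m with
    | zero => intro _; simpa using hTl
    | succ n ih =>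
      intro hn
      have hn' : n < 2 * k := by omega
      have hprev := ih (by omega)
      obtain ⟨hb1, hb2⟩ := hbound n hn'
      rw [Function.iterate_succ_apply', hprev, (hstep0 _ hb1 hb2).2]
      ring
  -- zero digits
  have hdig0 : ∀ n, 1 ≤ n → n ≤ 2 * k → dig β l n = 0 := by
    intro n h1n h2n
    obtain ⟨m, rfl⟩ : ∃ m, n = m + 1 := ⟨n - 1, by omega⟩
    have hm : m < 2 * k := by omega
    obtain ⟨hb1, hb2⟩ := hbound m hm
    rw [dig, horb m (by omega)]
    exact (hstep0 _ hb1 hb2).1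
  -- final digit 1
  have hfin : dig β l (2 * k + 1) = 1 := by
    have ho := horb (2 * k) le_rfl
    rw [dig, ho, (Nat.even_mul.mpr (Or.inl even_two)).neg_pow]
    apply hstep1
    · rcases Nat.eq_zero_or_pos k with hk0 | hkpos
      · rw [hk0]; simpa using hlx1.le
      · obtain ⟨j, rfl⟩ : ∃ j, k = j + 1 := ⟨k - 1, by omega⟩
        have h2j := hkmin j (by omega)
        have hpow : β ^ (2 * (j + 1)) = β ^ 2 * β ^ (2 * j) := by ring
        have h : β ^ 2 * (β ^ (2 * j) * (-x1)) < β ^ 2 * (1 / (β * (β + 1))) :=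
          (mul_lt_mul_iff_right₀ (by positivity)).mpr h2j
        have hsq : β ^ 2 * (1 / (β * (β + 1))) = β / (β + 1) := by
          field_simp
        rw [hsq] at h
        rw [hl, hpow]
        have hneg : (-β) / (β + 1) = -(β / (β + 1)) := by ring
        rw [hneg]
        have heq : β ^ 2 * β ^ (2 * j) * x1 = -(β ^ 2 * (β ^ (2 * j) * (-x1))) := by ring
        rw [heq]
        linarith
    · have heq2 : β ^ (2 * k) * x1 = -(β ^ (2 * k) * (-x1)) := by ring
      rw [heq2]
      linarith [hk]
  refine ⟨k + 1, by omega, ?_, ?_, ?_⟩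
  · rw [hd 1 le_rfl]
    simpa [dig] using hfloor1
  · rw [hd (2 * (k + 1)) (by omega)]
    have h : 2 * (k + 1) - 1 = 2 * k + 1 := by omega
    rw [h]; exact hfin
  · intro j hj1 hj2
    rw [hd j (by omega)]
    exact hdig0 (j - 1) (by omega) (by omega)
end

section
/- Let β > 1 be less than the golden ratio γ₀ = (1+√5)/2, and let L_β be the language of the (-β)-shift. Then the (-β)-shift is not transitive: there exist words u, w ∈ L_β (namely u = 1 and w = 0^{2i₀-1} for a suitable i₀) such that for every word v ∈ L_β, the word u v w is not in L_β. Consequently, the (-β)-shift is not a coded system. -/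
/-- Alternating lexicographic (non-strict) order on one-sided sequences
(index `k` corresponds to position `k+1`). -/
def seqAltLE (x y : ℕ → ℤ) : Prop :=
  x = y ∨ ∃ k : ℕ, (∀ i < k, x i = y i) ∧ (-1 : ℤ) ^ (k + 1) * (x k - y k) < 0

/-- The one-sided `(-β)`-shift determined by the lower bound `D = (d_i)_{i≥1}`
and the upper bound `Dstar = (d*_{i-1})_{i≥1}`: all tails lie between them. -/
def negShift (D Dstar : ℕ → ℤ) : Set (ℕ → ℤ) :=
  { x | ∀ n : ℕ, seqAltLE D (fun i => x (i + n)) ∧ seqAltLE (fun i => x (i + n)) Dstar }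

/-- The language of a one-sided symbolic system: all finite factors. -/
def lang (S : Set (ℕ → ℤ)) : Set (List ℤ) :=
  { w | ∃ x ∈ S, ∃ k : ℕ, w = (List.range w.length).map fun i => x (k + i) }

/-- The free monoid generated by a set of words. -/
def star (Y : Set (List ℤ)) : Set (List ℤ) :=
  { w | ∃ L : List (List ℤ), (∀ u ∈ L, u ∈ Y) ∧ w = L.flatten }

lemma tm_mem (β x : ℝ) : -(β/(β+1)) ≤ Tm β x ∧ Tm β x < 1 - β/(β+1) := by
  have h1 := Int.fract_nonneg (-β * x + β / (β + 1))
  have h2 := Int.fract_lt_one (-β * x + β / (β + 1))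
  have h3 : Tm β x = Int.fract (-β * x + β / (β + 1)) - β/(β+1) := by
    unfold Tm Int.fract; ring
  constructor <;> (rw [h3]; linarith)

lemma beta_lt_two (β : ℝ) (hβ2 : β < (1 + Real.sqrt 5) / 2) : β < 2 := by
  nlinarith [Real.sq_sqrt (by norm_num : (5:ℝ) ≥ 0), Real.sqrt_nonneg 5]

lemma beta_sq (β : ℝ) (hβ1 : 1 < β) (hβ2 : β < (1 + Real.sqrt 5) / 2) : β^2 < β + 1 := by
  nlinarith [Real.sq_sqrt (by norm_num : (5:ℝ) ≥ 0), Real.sqrt_nonneg 5]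

lemma orbit_mem (β : ℝ) (hβ1 : 1 < β) (n : ℕ) :
    -(β/(β+1)) ≤ (Tm β)^[n] (-β/(β+1)) ∧ (Tm β)^[n] (-β/(β+1)) < 1 - β/(β+1) := by
  cases n with
  | zero =>
    have hb0 : (0:ℝ) < β + 1 := by linarith
    have h : -β/(β+1) = -(β/(β+1)) := by ring
    have hc1 : β/(β+1) < 1 := (div_lt_one hb0).mpr (by linarith)
    have hc0 : 0 < β/(β+1) := div_pos (by linarith) hb0
    simp only [Function.iterate_zero, id_eq, h]
    constructor <;> linarith
  | succ m =>
    rw [Function.iterate_succ_apply']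
    exact tm_mem β _

lemma digit01' (β : ℝ) (hβ1 : 1 < β) (hβ2 : β < (1 + Real.sqrt 5) / 2) (n : ℕ) :
    dig β (-β/(β+1)) n = 0 ∨ dig β (-β/(β+1)) n = 1 := by
  obtain ⟨h1, h2⟩ := orbit_mem β hβ1 n
  have hβ2' := beta_lt_two β hβ2
  have hb0 : (0:ℝ) < β + 1 := by linarith
  have hc : β / (β + 1) * (β + 1) = β := div_mul_cancel₀ _ (ne_of_gt hb0)
  unfold dig
  have ht1 : 0 < -β * (Tm β)^[n] (-β/(β+1)) + β / (β + 1) := by nlinarith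
  have ht2 : -β * (Tm β)^[n] (-β/(β+1)) + β / (β + 1) < 2 := by nlinarith
  have hf1 : 0 ≤ ⌊-β * (Tm β)^[n] (-β/(β+1)) + β / (β + 1)⌋ :=
    Int.le_floor.mpr (by exact_mod_cast ht1.le)
  have hf2 : ⌊-β * (Tm β)^[n] (-β/(β+1)) + β / (β + 1)⌋ < 2 :=
    Int.floor_lt.mpr (by exact_mod_cast ht2)
  omega

lemma digit_one_iff' (β : ℝ) (hβ1 : 1 < β) (hβ2 : β < (1 + Real.sqrt 5) / 2) (n : ℕ) :
    dig β (-β/(β+1)) n = 1 ↔ 1 ≤ -β * (Tm β)^[n] (-β/(β+1)) + β / (β + 1) := by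
  constructor
  · intro h
    have := Int.floor_le (-β * (Tm β)^[n] (-β/(β+1)) + β / (β + 1))
    rw [dig] at h; rw [h] at this; exact_mod_cast this
  · intro h
    have hf1 : 1 ≤ ⌊-β * (Tm β)^[n] (-β/(β+1)) + β / (β + 1)⌋ :=
      Int.le_floor.mpr (by exact_mod_cast h)
    rcases digit01' β hβ1 hβ2 n with h0 | h1 <;> (unfold dig at *; omega)

lemma dig_zero (β : ℝ) (hβ1 : 1 < β) (hβ2 : β < (1 + Real.sqrt 5) / 2) :
    dig β (-β/(β+1)) 0 = 1 := by
  have hβ2' := beta_lt_two β hβ2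
  have hb0 : (0:ℝ) < β + 1 := by linarith
  have hval : -β * (-β/(β+1)) + β / (β + 1) = β := by field_simp
  unfold dig
  simp only [Function.iterate_zero, id_eq, hval]
  rw [Int.floor_eq_iff]
  constructor <;> (push_cast; linarith)

lemma rec_step (β : ℝ) (n : ℕ) :
    (Tm β)^[n+1] (-β/(β+1)) = -β * (Tm β)^[n] (-β/(β+1)) - dig β (-β/(β+1)) n := by
  rw [Function.iterate_succ_apply']; rfl

lemma second_one (β : ℝ) (hβ1 : 1 < β) (hβ2 : β < (1 + Real.sqrt 5) / 2) :
    ∃ M : ℕ, Odd M ∧ 1 ≤ M ∧ (∀ k, 1 ≤ k → k < M → dig β (-β/(β+1)) k = 0) ∧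
      dig β (-β/(β+1)) M = 1 := by
  have hβ2' := beta_lt_two β hβ2
  have hb0 : (0:ℝ) < β + 1 := by linarith
  have hsq := beta_sq β hβ1 hβ2
  set x0 : ℝ := -β/(β+1) with hx0
  set xs : ℕ → ℝ := fun n => (Tm β)^[n] x0 with hxs
  set D : ℕ → ℤ := fun n => dig β x0 n with hD
  have hrec : ∀ n, xs (n+1) = -β * xs n - D n := fun n => rec_step β n
  have hmem : ∀ n, -(β/(β+1)) ≤ xs n ∧ xs n < 1 - β/(β+1) := fun n => orbit_mem β hβ1 n
  have habs : ∀ n, |xs n| ≤ 1 := by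
    intro n
    obtain ⟨h1, h2⟩ := hmem n
    have hc1 : β/(β+1) < 1 := (div_lt_one hb0).mpr (by linarith)
    have hc0 : 0 < β/(β+1) := div_pos (by linarith) hb0
    rw [abs_le]; constructor <;> linarith
  -- xs 1 < 0
  have hxs1 : xs 1 = β * (β/(β+1)) - 1 := by
    have hD0 : D 0 = 1 := dig_zero β hβ1 hβ2
    rw [hrec 0, hD0]
    have : xs 0 = x0 := rfl
    rw [this]; push_cast; rw [hx0]; ring
  have hx1neg : xs 1 < 0 := by
    rw [hxs1]
    have : β * (β/(β+1)) = β^2/(β+1) := by ring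
    rw [this]
    have : β^2/(β+1) < 1 := (div_lt_one hb0).mpr (by linarith)
    linarith
  -- existence of a later digit 1
  have hex : ∃ n, 1 ≤ n ∧ D n = 1 := by
    by_contra hcon
    push_neg at hcon
    have hz : ∀ n, 1 ≤ n → D n = 0 := by
      intro n hn
      rcases digit01' β hβ1 hβ2 n with h | h
      · exact h
      · exact absurd h (hcon n hn)
    have hpow : ∀ m : ℕ, xs (m+1) = (-β)^m * xs 1 := by
      intro m
      induction m with
      | zero => simp
      | succ k ih =>
        rw [hrec (k+1), hz (k+1) (by omega), ih]
        push_cast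
        ring
    obtain ⟨m, hm⟩ := pow_unbounded_of_one_lt (1 / |xs 1|) hβ1
    have h1 : |xs (m+1)| = β^m * |xs 1| := by
      rw [hpow m, abs_mul, abs_pow, abs_neg, abs_of_pos (by linarith : (0:ℝ) < β)]
    have h2 : 0 < |xs 1| := abs_pos.mpr (ne_of_lt hx1neg)
    rw [div_lt_iff₀ h2] at hm
    have := habs (m+1)
    rw [h1] at this
    linarith
  set M := Nat.find hex with hM
  obtain ⟨hM1, hMdig⟩ : 1 ≤ M ∧ D M = 1 := Nat.find_spec hex
  have hzero : ∀ k, 1 ≤ k → k < M → D k = 0 := by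
    intro k h1k hkM
    have := Nat.find_min hex hkM
    rcases digit01' β hβ1 hβ2 k with h | h
    · exact h
    · exact absurd ⟨h1k, h⟩ this
  have hpowM : ∀ m : ℕ, m + 1 ≤ M → xs (m+1) = (-β)^m * xs 1 := by
    intro m
    induction m with
    | zero => simp
    | succ k ih =>
      intro hk
      rw [hrec (k+1), hzero (k+1) (by omega) (by omega), ih (by omega)]
      push_cast
      ring
  have hxsM : xs M = (-β)^(M-1) * xs 1 := by
    have : M - 1 + 1 = M := by omega
    rw [← this]
    exact hpowM (M-1) (by omega)
  have hMneg : xs M < 0 := by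
    have h1 : 1 ≤ -β * xs M + β/(β+1) := (digit_one_iff' β hβ1 hβ2 M).mp hMdig
    have hc1 : β/(β+1) < 1 := (div_lt_one hb0).mpr (by linarith)
    nlinarith
  refine ⟨M, ?_, hM1, hzero, hMdig⟩
  rcases Nat.even_or_odd M with he | ho
  · exfalso
    have hodd : Odd (M - 1) := by
      rcases he with ⟨t, ht⟩
      exact ⟨t - 1, by omega⟩
    rw [hodd.neg_pow] at hxsM
    have hpos : (0:ℝ) < β^(M-1) := pow_pos (by linarith) _
    nlinarith
  · exact ho

lemma first_zero (β : ℝ) (hβ1 : 1 < β) (hβ2 : β < (1 + Real.sqrt 5) / 2) :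
    ∃ N : ℕ, Odd N ∧ (∀ k, k < N → dig β (-β/(β+1)) k = 1) ∧
      dig β (-β/(β+1)) N = 0 := by
  have hβ2' := beta_lt_two β hβ2
  have hb0 : (0:ℝ) < β + 1 := by linarith
  have hsq := beta_sq β hβ1 hβ2
  set x0 : ℝ := -β/(β+1) with hx0
  set xs : ℕ → ℝ := fun n => (Tm β)^[n] x0 with hxs
  set D : ℕ → ℤ := fun n => dig β x0 n with hD
  have hrec : ∀ n, xs (n+1) = -β * xs n - D n := fun n => rec_step β n
  have hmem : ∀ n, -(β/(β+1)) ≤ xs n ∧ xs n < 1 - β/(β+1) := fun n => orbit_mem β hβ1 n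
  have habs : ∀ n, |xs n| ≤ 1 := by
    intro n
    obtain ⟨h1, h2⟩ := hmem n
    have hc1 : β/(β+1) < 1 := (div_lt_one hb0).mpr (by linarith)
    have hc0 : 0 < β/(β+1) := div_pos (by linarith) hb0
    rw [abs_le]; constructor <;> linarith
  set q : ℝ := -(1/(β+1)) with hq
  have hqfix : -β * q - 1 = q := by rw [hq]; field_simp; ring
  have hy0 : x0 - q < 0 := by
    rw [hx0, hq]
    have : -β/(β+1) - -(1/(β+1)) = (1 - β)/(β+1) := by ring
    rw [this]
    exact div_neg_of_neg_of_pos (by linarith) hb0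
  have hqabs : |q| ≤ 1 := by
    rw [hq, abs_neg, abs_of_pos (by positivity : (0:ℝ) < 1/(β+1))]
    rw [div_le_one hb0]; linarith
  -- existence of a zero digit
  have hex : ∃ n, D n = 0 := by
    by_contra hcon
    push_neg at hcon
    have ho : ∀ n, D n = 1 := by
      intro n
      rcases digit01' β hβ1 hβ2 n with h | h
      · exact absurd h (hcon n)
      · exact h
    have hpow : ∀ m : ℕ, xs m = q + (-β)^m * (x0 - q) := by
      intro m
      induction m with
      | zero => simp [hxs]
      | succ k ih =>
        rw [hrec k, ho k, ih]
        push_cast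
        have : (-β)^(k+1) = -β * (-β)^k := by ring
        rw [this]
        nlinarith [hqfix]
    have h2 : 0 < |x0 - q| := abs_pos.mpr (ne_of_lt hy0)
    obtain ⟨m, hm⟩ := pow_unbounded_of_one_lt (2 / |x0 - q|) hβ1
    rw [div_lt_iff₀ h2] at hm
    have h1 : |xs m - q| = β^m * |x0 - q| := by
      rw [hpow m]
      have : q + (-β)^m * (x0 - q) - q = (-β)^m * (x0 - q) := by ring
      rw [this, abs_mul, abs_pow, abs_neg, abs_of_pos (by linarith : (0:ℝ) < β)]
    have h3 : |xs m - q| ≤ 2 := by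
      have := habs m
      have h4 := abs_sub (xs m) q
      calc |xs m - q| ≤ |xs m| + |q| := abs_sub (xs m) q
      _ ≤ 2 := by linarith
    rw [h1] at h3
    linarith
  set N := Nat.find hex with hN
  have hNdig : D N = 0 := Nat.find_spec hex
  have hone : ∀ k, k < N → D k = 1 := by
    intro k hkN
    have := Nat.find_min hex hkN
    rcases digit01' β hβ1 hβ2 k with h | h
    · exact absurd h this
    · exact h
  have hpowN : ∀ m : ℕ, m ≤ N → xs m = q + (-β)^m * (x0 - q) := by
    intro m
    induction m with
    | zero => intro _; simp [hxs]
    | succ k ih =>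
      intro hk
      rw [hrec k, hone k (by omega), ih (by omega)]
      push_cast
      have : (-β)^(k+1) = -β * (-β)^k := by ring
      rw [this]
      nlinarith [hqfix]
  refine ⟨N, ?_, hone, hNdig⟩
  rcases Nat.even_or_odd N with he | ho
  · exfalso
    -- N even would force xs N ≤ x0, hence digit 1 at N
    have hxsN : xs N = q + β^N * (x0 - q) := by
      rw [hpowN N le_rfl, he.neg_pow]
    have hbN : (1:ℝ) ≤ β^N := one_le_pow₀ (by linarith)
    have hle : xs N ≤ x0 := by
      have : β^N * (x0 - q) ≤ 1 * (x0 - q) := by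
        apply mul_le_mul_of_nonpos_right hbN (le_of_lt hy0)
      rw [hxsN]; linarith
    have hdig1 : D N = 1 := by
      apply (digit_one_iff' β hβ1 hβ2 N).mpr
      have hxx : (Tm β)^[N] (-β/(β+1)) = xs N := rfl
      rw [hxx]
      have hc : β / (β + 1) * (β + 1) = β := div_mul_cancel₀ _ (ne_of_gt hb0)
      have hx0' : x0 = -(β/(β+1)) := by rw [hx0]; ring
      nlinarith [hle]
    rw [hdig1] at hNdig; exact absurd hNdig (by norm_num)
  · exact ho

/-- Factors of a set of finite words. -/
def listFactors (Y : Set (List ℤ)) : Set (List ℤ) :=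
  { w | ∃ u v : List ℤ, u ++ w ++ v ∈ Y }

theorem stmt14 (β : ℝ) (hβ1 : 1 < β) (hβ2 : β < (1 + Real.sqrt 5) / 2)
    (d dstar : ℕ → ℤ)
    (hd : ∀ i, 1 ≤ i → d i = dig β (-β / (β + 1)) (i - 1))
    (hdstar0 : dstar 0 = 0)
    -- `(d*_i)` is the corrected sequence: it coincides with `(d_i)` unless
    -- `(d_i)` is periodic with odd period `p`, in which case the last digit of
    -- the period is decreased by 1 and a 0 is appended:
    (hdstar :
      (∃ p : ℕ, Odd p ∧ 1 ≤ p ∧ (∀ i, 1 ≤ i → d (i + p) = d i) ∧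
        (∀ i, 1 ≤ i → dstar i =
          if i % (p + 1) = 0 then 0
          else if i % (p + 1) = p then d p - 1
          else d (i % (p + 1)))) ∨
      ((¬∃ p : ℕ, Odd p ∧ 1 ≤ p ∧ ∀ i, 1 ≤ i → d (i + p) = d i) ∧
        ∀ i, 1 ≤ i → dstar i = d i))
    (L : Set (List ℤ))
    (hL : L = lang (negShift (fun i => d (i + 1)) dstar)) :
    (∃ u ∈ L, ∃ w ∈ L, ∀ v ∈ L, u ++ v ++ w ∉ L) ∧
    ¬∃ C : Set (List ℤ), L = listFactors (star C) := by

  obtain ⟨N, hNodd, hNone, hNzero⟩ := first_zero β hβ1 hβ2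
  obtain ⟨M, hModd, hM1, hMzero, hMone⟩ := second_one β hβ1 hβ2
  have hdig : ∀ i : ℕ, d (i+1) = dig β (-β/(β+1)) i := by
    intro i
    rw [hd (i+1) (by omega)]
    simp
  have hd1v : d 1 = 1 := by
    have h := hdig 0
    rw [dig_zero β hβ1 hβ2] at h
    exact h
  -- dstar 1 = 1, ruling out period 1
  have hds1 : dstar 1 = 1 := by
    rcases hdstar with ⟨p, hpodd, hp1, hper, hval⟩ | ⟨_, hval⟩
    · by_cases hp : p = 1
      · exfalso
        subst hp
        have hall : ∀ i, 1 ≤ i → d i = d 1 := by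
          intro i hi
          induction i with
          | zero => omega
          | succ n ih =>
            rcases Nat.eq_zero_or_pos n with h0 | h0
            · subst h0; rfl
            · rw [hper n h0]; exact ih h0
        have h1 : d (N+1) = d 1 := hall (N+1) (by omega)
        rw [hdig N, hNzero, hd1v] at h1
        exact absurd h1 (by norm_num)
      · have hp2 : 2 ≤ p := by
          rcases hp1.lt_or_eq with h | h
          · omega
          · omega
        have hmod : 1 % (p + 1) = 1 := Nat.mod_eq_of_lt (by omega)
        rw [hval 1 le_rfl, hmod, if_neg (by omega), if_neg (by omega), hd1v]
    · rw [hval 1 le_rfl, hd1v]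
  set S := negShift (fun i => d (i + 1)) dstar with hS
  -- all letters of sequences in S are 0 or 1
  have hletters : ∀ x ∈ S, ∀ n : ℕ, x n = 0 ∨ x n = 1 := by
    intro x hx n
    obtain ⟨hlo, hup⟩ := hx n
    have hle : x n ≤ 1 := by
      rcases hlo with heq | ⟨k, hik, hk⟩
      · have h0 := congrFun heq 0
        simp only [zero_add] at h0
        rw [hd1v] at h0
        omega
      · rcases Nat.eq_zero_or_pos k with h0 | h0
        · subst h0
          simp only [zero_add, pow_one, hd1v] at hk
          omega
        · have h0 := hik 0 h0
          simp only [zero_add] at h0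
          rw [hd1v] at h0
          omega
    have hge : 0 ≤ x n := by
      rcases hup with heq | ⟨k, hik, hk⟩
      · have h0 := congrFun heq 0
        simp only [zero_add] at h0
        rw [hdstar0] at h0
        omega
      · rcases Nat.eq_zero_or_pos k with h0 | h0
        · subst h0
          simp only [zero_add, pow_one, hdstar0] at hk
          omega
        · have h0 := hik 0 h0
          simp only [zero_add] at h0
          rw [hdstar0] at h0
          omega
    omega
  -- a 1 cannot be followed by M zeros
  have hforb : ∀ x ∈ S, ∀ t : ℕ, x t = 1 → ¬(∀ j, 1 ≤ j → j ≤ M → x (t + j) = 0) := by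
    intro x hx t hxt hall
    obtain ⟨hlo, _⟩ := hx t
    have htail : ∀ j, 1 ≤ j → j ≤ M → x (j + t) = 0 := by
      intro j h1 h2
      rw [Nat.add_comm]
      exact hall j h1 h2
    rcases hlo with heq | ⟨k, hik, hk⟩
    · have hM' := congrFun heq M
      rw [hdig M, hMone, htail M hM1 le_rfl] at hM'
      exact absurd hM' (by norm_num)
    · rcases lt_trichotomy k M with hlt | heq' | hgt
      · rcases Nat.eq_zero_or_pos k with h0 | h0
        · subst h0
          simp only [zero_add, pow_one, hd1v, hxt] at hk
          omega
        · simp only [] at hk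
          rw [hdig k, hMzero k h0 hlt, htail k h0 (le_of_lt hlt)] at hk
          simp at hk
      · subst heq'
        simp only [] at hk
        rw [hdig k, hMone, htail k hM1 le_rfl] at hk
        have hev : Even (k + 1) := by
          rcases hModd with ⟨t', ht'⟩
          exact ⟨t' + 1, by omega⟩
        rw [hev.neg_one_pow] at hk
        omega
      · have hM' := hik M hgt
        simp only [] at hM'
        rw [hdig M, hMone, htail M hM1 le_rfl] at hM'
        exact absurd hM' (by norm_num)
  -- the constant-1 sequence is in S
  have honeS : (fun _ : ℕ => (1:ℤ)) ∈ S := by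
    intro n
    constructor
    · right
      refine ⟨N, ?_, ?_⟩
      · intro i hi
        simp only []
        rw [hdig i, hNone i hi]
      · simp only []
        rw [hdig N, hNzero]
        have hev : Even (N + 1) := by
          rcases hNodd with ⟨t', ht'⟩
          exact ⟨t' + 1, by omega⟩
        rw [hev.neg_one_pow]
        norm_num
    · right
      refine ⟨0, by omega, ?_⟩
      simp only [zero_add, pow_one, hdstar0]
      norm_num
  -- the constant-0 sequence is in S
  have hzeroS : (fun _ : ℕ => (0:ℤ)) ∈ S := by
    intro n
    constructor
    · right
      refine ⟨0, by omega, ?_⟩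
      simp only [zero_add, pow_one, hd1v]
      norm_num
    · right
      refine ⟨1, ?_, ?_⟩
      · intro i hi
        interval_cases i
        simp only [zero_add, hdstar0]
      · simp only [hds1]
        norm_num
  have hu : [(1:ℤ)] ∈ L := by
    rw [hL]
    exact ⟨fun _ => 1, honeS, 0, by simp⟩
  have hw : List.replicate M (0:ℤ) ∈ L := by
    rw [hL]
    refine ⟨fun _ => 0, hzeroS, 0, ?_⟩
    simp [List.map_const']
  have hkey : ∀ v ∈ L, [(1:ℤ)] ++ v ++ List.replicate M (0:ℤ) ∉ L := by
    intro v hv hcon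
    rw [hL] at hcon
    obtain ⟨x, hxS, k, hfac⟩ := hcon
    set z := [(1:ℤ)] ++ v ++ List.replicate M (0:ℤ) with hz
    have hlen : z.length = (v.length + 1) + M := by
      simp [hz]
      omega
    set ns := v.length + 1 with hns
    have hzq : ∀ i, i < z.length → z[i]? = some (x (k+i)) := by
      intro i hi
      have h := congrArg (fun l => l[i]?) hfac
      rw [h]
      rw [List.getElem?_map, List.getElem?_range hi]
      rfl
    have hx0 : x k = 1 := by
      have h := hzq 0 (by omega)
      have h2 : z[0]? = some 1 := by
        rw [hz, List.append_assoc, List.singleton_append]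
        simp
      rw [h2] at h
      simp at h
      omega
    have hxtail : ∀ i, ns ≤ i → i < ns + M → x (k + i) = 0 := by
      intro i h1 h2
      have h := hzq i (by omega)
      have h2' : z[i]? = some 0 := by
        rw [hz]
        rw [List.getElem?_append_right (by simp [hns] at h1 ⊢; omega)]
        rw [List.getElem?_replicate]
        rw [if_pos (by simp [hns]; omega)]
      rw [h2'] at h
      simp at h
      omega
    -- position of the last 1 among the first ns letters
    have hT0 : 0 ∈ (Finset.range ns).filter (fun i => x (k+i) = 1) := by
      simp [hns]
      simpa using hx0
    set T := (Finset.range ns).filter (fun i => x (k+i) = 1) with hT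
    set p := T.max' ⟨0, hT0⟩ with hp
    have hpmem : p ∈ T := T.max'_mem ⟨0, hT0⟩
    have hpns : p < ns := by
      have := (Finset.mem_filter.mp hpmem).1
      simpa using this
    have hxp : x (k + p) = 1 := (Finset.mem_filter.mp hpmem).2
    have hzeros : ∀ j, 1 ≤ j → j ≤ M → x ((k + p) + j) = 0 := by
      intro j h1 h2
      have hassoc : (k + p) + j = k + (p + j) := by omega
      rw [hassoc]
      by_cases hc : p + j < ns
      · rcases hletters x hxS (k + (p+j)) with h | h
        · exact h
        · exfalso
          have hmem : p + j ∈ T := by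
            rw [hT]
            simp only [Finset.mem_filter, Finset.mem_range]
            exact ⟨hc, h⟩
          have := T.le_max' (p + j) hmem
          omega
      · exact hxtail (p+j) (by omega) (by omega)
    exact hforb x hxS (k+p) hxp hzeros
  refine ⟨⟨[(1:ℤ)], hu, List.replicate M (0:ℤ), hw, hkey⟩, ?_⟩
  rintro ⟨C, hC⟩
  rw [hC] at hu hw
  obtain ⟨a, b, hab⟩ := hu
  obtain ⟨c', e, hce⟩ := hw
  obtain ⟨L1, hL1, hfl1⟩ := hab
  obtain ⟨L2, hL2, hfl2⟩ := hce
  have hcat : (a ++ [(1:ℤ)] ++ b) ++ (c' ++ List.replicate M (0:ℤ) ++ e) ∈ star C := by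
    refine ⟨L1 ++ L2, ?_, ?_⟩
    · intro u hu'
      rcases List.mem_append.mp hu' with h | h
      · exact hL1 u h
      · exact hL2 u h
    · rw [List.flatten_append, ← hfl1, ← hfl2]
  have hv : b ++ c' ∈ L := by
    rw [hC]
    refine ⟨a ++ [(1:ℤ)], List.replicate M (0:ℤ) ++ e, ?_⟩
    simpa [List.append_assoc] using hcat
  have hbad : [(1:ℤ)] ++ (b ++ c') ++ List.replicate M (0:ℤ) ∈ L := by
    rw [hC]
    refine ⟨a, e, ?_⟩
    simpa [List.append_assoc] using hcat
  exact hkey (b ++ c') hv hbad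
end
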